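/- (Until induction step for soundness, satisfaction implies nonnegativity.) Let φ₁, φ₂ be STL formulas and x : {0,…,H} → ℝⁿ a signal such that for i ∈ {1,2} and every time s ∈ {0,…,H}, χ_{φᵢ}(x,s) = +1 implies θ⁺_{φᵢ}(x,s) ≥ 0. Then for every a ≤ b and every time t ∈ {0,…,H}, χ_{φ₁ U_[a,b] φ₂}(x,t) = +1 implies θ⁺_{φ₁ U_[a,b] φ₂}(x,t) ≥ 0. -/
import Mathlib


namespace STLTime

/-- STL formulas over states in `ℝⁿ`: predicates `μ(x) ≥ 0`, negation,
conjunction, and bounded Until `U_[a,b]` with `a ≤ b`. -/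
inductive STL (n : ℕ) : Type where
  | pred : ((Fin n → ℝ) → ℝ) → STL n
  | not  : STL n → STL n
  | and  : STL n → STL n → STL n
  | untl : (a b : ℕ) → a ≤ b → STL n → STL n → STL n

/-- Characteristic function `χ_φ(x,t) ∈ {-1,+1}` over horizon `H`. -/
noncomputable def chi {n : ℕ} (H : ℕ) (x : ℕ → Fin n → ℝ) : STL n → ℕ → ℤ
  | .pred μ, t => if 0 ≤ μ (x t) then 1 else -1
  | .not φ, t => - chi H x φ t
  | .and φ₁ φ₂, t => min (chi H x φ₁ t) (chi H x φ₂ t)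
  | .untl a b _ φ₁ φ₂, t =>
      if h : (Finset.Icc (t + a) (min (t + b) H)).Nonempty then
        (Finset.Icc (t + a) (min (t + b) H)).sup' h fun t' =>
          (Finset.Ico t t').fold min (chi H x φ₂ t') fun t'' => chi H x φ₁ t''
      else -1

/-- Right time robustness `θ⁺_φ(x,t)` over horizon `H`. -/
noncomputable def thetaPlus {n : ℕ} (H : ℕ) (x : ℕ → Fin n → ℝ) : STL n → ℕ → ℤ
  | .pred μ, t =>
      chi H x (.pred μ) t *
        ((sSup {τ : ℕ | t + τ ≤ H ∧
            ∀ t' ∈ Set.Icc t (t + τ),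
              chi H x (.pred μ) t' = chi H x (.pred μ) t} : ℕ) : ℤ)
  | .not φ, t => - thetaPlus H x φ t
  | .and φ₁ φ₂, t => min (thetaPlus H x φ₁ t) (thetaPlus H x φ₂ t)
  | .untl a b _ φ₁ φ₂, t =>
      if h : (Finset.Icc (t + a) (min (t + b) H)).Nonempty then
        (Finset.Icc (t + a) (min (t + b) H)).sup' h fun t' =>
          (Finset.Ico t t').fold min (thetaPlus H x φ₂ t') fun t'' => thetaPlus H x φ₁ t''
      else -1

/-- Left time robustness `θ⁻_φ(x,t)` over horizon `H`. -/
noncomputable def thetaMinus {n : ℕ} (H : ℕ) (x : ℕ → Fin n → ℝ) : STL n → ℕ → ℤ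
  | .pred μ, t =>
      chi H x (.pred μ) t *
        ((sSup {τ : ℕ | τ ≤ t ∧
            ∀ t' ∈ Set.Icc (t - τ) t,
              chi H x (.pred μ) t' = chi H x (.pred μ) t} : ℕ) : ℤ)
  | .not φ, t => - thetaMinus H x φ t
  | .and φ₁ φ₂, t => min (thetaMinus H x φ₁ t) (thetaMinus H x φ₂ t)
  | .untl a b _ φ₁ φ₂, t =>
      if h : (Finset.Icc (t + a) (min (t + b) H)).Nonempty then
        (Finset.Icc (t + a) (min (t + b) H)).sup' h fun t' =>
          (Finset.Ico t t').fold min (thetaMinus H x φ₂ t') fun t'' => thetaMinus H x φ₁ t''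
      else -1


lemma chi_bounds {n H : ℕ} (x : ℕ → Fin n → ℝ) (φ : STL n) :
    ∀ t, -1 ≤ chi H x φ t ∧ chi H x φ t ≤ 1 := by
  induction φ with
  | pred μ => intro t; simp only [chi]; split <;> norm_num
  | not φ ih =>
    intro t; simp only [chi]
    constructor <;> linarith [(ih t).1, (ih t).2]
  | and φ₁ φ₂ ih1 ih2 =>
    intro t; simp only [chi]
    exact ⟨le_min (ih1 t).1 (ih2 t).1, le_trans (min_le_left _ _) (ih1 t).2⟩
  | untl a b hab φ₁ φ₂ ih1 ih2 =>
    intro t; simp only [chi]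
    split
    · next h =>
      constructor
      · refine le_trans ?_ (Finset.le_sup' _ h.choose_spec)
        rw [Finset.le_fold_min]
        exact ⟨(ih2 _).1, fun y _ => (ih1 y).1⟩
      · apply Finset.sup'_le
        intro t' _
        rw [Finset.fold_min_le]
        exact Or.inl (ih2 t').2
    · norm_num

/-- Until induction step for soundness: satisfaction implies nonnegativity. -/
theorem until_soundness_sat_nonneg {n H : ℕ} (φ₁ φ₂ : STL n) (x : ℕ → Fin n → ℝ)
    (h1 : ∀ s ≤ H, chi H x φ₁ s = 1 → 0 ≤ thetaPlus H x φ₁ s)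
    (h2 : ∀ s ≤ H, chi H x φ₂ s = 1 → 0 ≤ thetaPlus H x φ₂ s)
    (a b : ℕ) (hab : a ≤ b) (t : ℕ) (ht : t ≤ H)
    (h : chi H x (.untl a b hab φ₁ φ₂) t = 1) :
    0 ≤ thetaPlus H x (.untl a b hab φ₁ φ₂) t := by
  simp only [chi] at h
  by_cases hne : (Finset.Icc (t + a) (min (t + b) H)).Nonempty
  · rw [dif_pos hne] at h
    obtain ⟨t', ht', heq⟩ := Finset.exists_mem_eq_sup' hne
      (fun t' => (Finset.Ico t t').fold min (chi H x φ₂ t') fun t'' => chi H x φ₁ t'')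
    rw [heq] at h
    have hfold : (1 : ℤ) ≤ (Finset.Ico t t').fold min (chi H x φ₂ t')
        fun t'' => chi H x φ₁ t'' := h.ge
    rw [Finset.le_fold_min] at hfold
    have ht'H : t' ≤ H := le_trans (Finset.mem_Icc.mp ht').2 (min_le_right _ _)
    have hc2 : chi H x φ₂ t' = 1 := le_antisymm (chi_bounds x φ₂ t').2 hfold.1
    have hθ2 : 0 ≤ thetaPlus H x φ₂ t' := h2 t' ht'H hc2
    have hθ1 : ∀ t'' ∈ Finset.Ico t t', 0 ≤ thetaPlus H x φ₁ t'' := by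
      intro t'' htt
      have hlt := (Finset.mem_Ico.mp htt).2
      exact h1 t'' (le_trans hlt.le ht'H)
        (le_antisymm (chi_bounds x φ₁ t'').2 (hfold.2 t'' htt))
    simp only [thetaPlus, dif_pos hne]
    refine le_trans ?_ (Finset.le_sup' _ ht')
    rw [Finset.le_fold_min]
    exact ⟨hθ2, hθ1⟩
  · rw [dif_neg hne] at h; norm_num at h

end STLTime
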